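/- For every s ∈ ℂ and every integer m ≥ 1, on (𝔳 × 𝔷) ∖ {(0,0)} one has ( (4s+2ρ−2)Δ₂ − (4m+p₂)Δ )( |X₂|^{2m} K_{s−m} ) = 8(s−m)(4s+2ρ−2)(2s+q−2m−1) |X₂|^{2m+2} K_{s−m−1} + 2m(2m+p₂−2)(4s+2ρ₁−4m−2) |X₂|^{2m−2} K_{s−m}. -/

import Mathlib

open scoped InnerProductSpace

noncomputable section

/-- The left-invariant vector field on `N = 𝔳 × 𝔷` associated to `S ∈ 𝔳`:
`(Sf)(X,Z) = ∂_𝔳 f(X,Z)[S] - ½ ∂_𝔷 f(X,Z)[[S,X]]`. -/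
def vfV {V W : Type*} [NormedAddCommGroup V] [InnerProductSpace ℝ V]
    [NormedAddCommGroup W] [InnerProductSpace ℝ W]
    (br : V →ₗ[ℝ] V →ₗ[ℝ] W) (S : V) (f : V × W → ℂ) : V × W → ℂ :=
  fun x => fderiv ℝ f x (S, 0) - (1/2 : ℂ) * fderiv ℝ f x (0, br S x.1)

/-- The left-invariant vector field associated to `T ∈ 𝔷`: `(Tf)(X,Z) = ∂_𝔷 f(X,Z)[T]`. -/
def vfW {V W : Type*} [NormedAddCommGroup V] [InnerProductSpace ℝ V]
    [NormedAddCommGroup W] [InnerProductSpace ℝ W]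
    (T : W) (f : V × W → ℂ) : V × W → ℂ :=
  fun x => fderiv ℝ f x (0, T)

/-- Sub-Laplacian `∑_{j ∈ fs} S_j²` associated to a family of vectors in `𝔳`. -/
def subLap {V W : Type*} [NormedAddCommGroup V] [InnerProductSpace ℝ V]
    [NormedAddCommGroup W] [InnerProductSpace ℝ W] {ι : Type*}
    (br : V →ₗ[ℝ] V →ₗ[ℝ] W) (fs : Finset ι) (S : ι → V) (f : V × W → ℂ) : V × W → ℂ :=
  fun x => ∑ j ∈ fs, vfV br (S j) (vfV br (S j) f) x

/-- Central Laplacian `∑_{j ∈ fs} T_j²` associated to a family of vectors in `𝔷`. -/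
def boxLap {V W : Type*} [NormedAddCommGroup V] [InnerProductSpace ℝ V]
    [NormedAddCommGroup W] [InnerProductSpace ℝ W] {ι : Type*}
    (fs : Finset ι) (T : ι → W) (f : V × W → ℂ) : V × W → ℂ :=
  fun x => ∑ j ∈ fs, vfW (T j) (vfW (T j) f) x

/-- The norm function `K(X,Z) = |X|⁴ + |Z|²`. -/
def Kfun {V W : Type*} [NormedAddCommGroup V] [NormedAddCommGroup W] (x : V × W) : ℝ :=
  ‖x.1‖^4 + ‖x.2‖^2

/-- The complex power `K_s = K^s`. -/
def Ks {V W : Type*} [NormedAddCommGroup V] [NormedAddCommGroup W] (s : ℂ) (x : V × W) : ℂ :=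
  (Kfun x : ℂ) ^ s

/-- `ρ = (p+2q)/2` as a complex number. -/
def rhoC (p q : ℕ) : ℂ := ((p : ℂ) + 2*q)/2

/-- `B(s) = 4s(4s+2ρ-2)`. -/
def Bc (p q : ℕ) (s : ℂ) : ℂ := 4*s*(4*s + 2*(rhoC p q) - 2)

/-- The component `X₂` of `X ∈ 𝔳` in `𝔳₂ = 𝔳₁ᗮ`. -/
def projPerp {V : Type*} [NormedAddCommGroup V] [InnerProductSpace ℝ V]
    [FiniteDimensional ℝ V] (V₁ : Submodule ℝ V) (X : V) : V :=
  (V₁ᗮ.orthogonalProjection X : V)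

/-- `ρ₁ = (p₁+2q)/2` as a complex number. -/
def rho1C (p₁ q : ℕ) : ℂ := ((p₁ : ℂ) + 2*q)/2

/-!
Along the one-parameter subgroup `t ↦ x · exp(tS)` the left-invariant field `S` acts as `d/dt`,
so `S²f(x)` is the second derivative of `t ↦ f(x · exp(tS))` at `0`. For `f = |X₂|^{2m} K^σ`
this expresses `S_j² f` through `S_j |X₂|²`, `S_j K` and `S_j² K`. Summed over the part of an
adapted orthonormal basis spanning `U = 𝔳₂` or `U = 𝔳`, products of these become inner products
with the orthogonal projection `Q` onto `U`, and the H-type identities `⟨J_Z X, X⟩ = 0`,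
`|J_Z X|² = 16|Z|²|X|²`, `J_Z U ⊆ U` give `Σ (S_j K)² = 16 K |QX|²` and
`Σ S_j² K = 8(1+q)|QX|² + 4|X|² dim U`. In the stated combination the terms containing `|X|²`
cancel.
-/

open Filter Topology

section LeftInvariantCalculus

variable {V W : Type*} [NormedAddCommGroup V] [InnerProductSpace ℝ V]
  [NormedAddCommGroup W] [InnerProductSpace ℝ W]
  (br : V →ₗ[ℝ] V →ₗ[ℝ] W) (S : V)

/-- The curve `t ↦ x · exp(tS)` for the group law `(X,Z)(X',Z') = (X+X', Z+Z'+½[X,X'])`. -/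
def mulExp (x : V × W) (t : ℝ) : V × W :=
  (x.1 + t • S, x.2 - (t / 2) • br S x.1)

theorem mulExp_zero (x : V × W) : mulExp br S x 0 = x := by
  simp [mulExp]

theorem mulExp_mulExp {S : V} (hS : br S S = 0) (x : V × W) (t τ : ℝ) :
    mulExp br S (mulExp br S x t) τ = mulExp br S x (t + τ) := by
  simp only [mulExp, map_add, map_smul, hS, smul_zero, add_zero, Prod.mk.injEq]
  constructor
  · rw [add_smul, add_assoc]
  · rw [add_div, add_smul, sub_sub]

theorem hasDerivAt_mulExp_fst (x : V × W) (t : ℝ) :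
    HasDerivAt (fun t => (mulExp br S x t).1) S t := by
  show HasDerivAt (fun t : ℝ => x.1 + t • S) S t
  simpa using ((hasDerivAt_id t).smul_const S).const_add x.1

theorem hasDerivAt_mulExp_snd (x : V × W) (t : ℝ) :
    HasDerivAt (fun t => (mulExp br S x t).2) (-(1 / 2 : ℝ) • br S x.1) t := by
  show HasDerivAt (fun t : ℝ => x.2 - (t / 2) • br S x.1) _ t
  simpa [neg_smul, one_div] using
    (((hasDerivAt_id t).div_const 2).smul_const (br S x.1)).const_sub x.2

theorem hasDerivAt_mulExp (x : V × W) (t : ℝ) :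
    HasDerivAt (mulExp br S x) (S, -(1 / 2 : ℝ) • br S x.1) t :=
  (hasDerivAt_mulExp_fst br S x t).prodMk (hasDerivAt_mulExp_snd br S x t)

theorem vfV_eq_deriv_comp {f : V × W → ℂ} {x : V × W} (hf : DifferentiableAt ℝ f x) :
    vfV br S f x = deriv (f ∘ mulExp br S x) 0 := by
  have hfx : HasFDerivAt f (fderiv ℝ f x) (mulExp br S x 0) := by
    rw [mulExp_zero]; exact hf.hasFDerivAt
  rw [(hfx.comp_hasDerivAt (0 : ℝ) (hasDerivAt_mulExp br S x 0)).deriv]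
  have hsplit : ((S, -(1 / 2 : ℝ) • br S x.1) : V × W)
      = (S, 0) + (-(1 / 2 : ℝ)) • (0, br S x.1) := by
    simp
  rw [hsplit, map_add, map_smul, vfV, Complex.real_smul]
  push_cast
  ring

theorem vfV_comp_mulExp {S : V} (hS : br S S = 0) {f : V × W → ℂ} {x : V × W} {t : ℝ}
    (hf : DifferentiableAt ℝ f (mulExp br S x t)) :
    vfV br S f (mulExp br S x t) = deriv (f ∘ mulExp br S x) t := by
  rw [vfV_eq_deriv_comp br S hf]
  simp only [Function.comp_def, mulExp_mulExp br hS]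
  simpa using deriv_comp_const_add (fun τ => f (mulExp br S x τ)) t 0

theorem ContDiffAt.differentiableAt_vfV [FiniteDimensional ℝ V] {f : V × W → ℂ} {x : V × W}
    (hf : ContDiffAt ℝ 2 f x) : DifferentiableAt ℝ (vfV br S f) x := by
  have hdf : DifferentiableAt ℝ (fderiv ℝ f) x :=
    (hf.fderiv_right (m := 1) (by norm_num)).differentiableAt (by norm_num)
  have hbr : Differentiable ℝ fun y : V × W => ((0 : V), br S y.1) :=
    (differentiable_const _).prodMk
      ((LinearMap.toContinuousLinearMap (br S)).differentiable.comp differentiable_fst)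
  exact (hdf.clm_apply (differentiableAt_const _)).sub
    ((hdf.clm_apply (hbr x)).const_mul _)

theorem vfV_vfV_eq_deriv_deriv [FiniteDimensional ℝ V] {S : V} (hS : br S S = 0)
    {f : V × W → ℂ} {x : V × W} (hf : ContDiffAt ℝ 2 f x) :
    vfV br S (vfV br S f) x = deriv (deriv (f ∘ mulExp br S x)) 0 := by
  rw [vfV_eq_deriv_comp br S (hf.differentiableAt_vfV br S)]
  apply Filter.EventuallyEq.deriv_eq
  have hcont : ContinuousAt (mulExp br S x) 0 := (hasDerivAt_mulExp br S x 0).continuousAt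
  have hnear : ∀ᶠ y in 𝓝 (mulExp br S x 0), DifferentiableAt ℝ f y :=
    (mulExp_zero br S x).symm ▸ (hf.eventually (by simp)).mono
      fun y hy => hy.differentiableAt (by norm_num)
  filter_upwards [hcont.eventually hnear] with t ht
  exact vfV_comp_mulExp br hS ht

end LeftInvariantCalculus

section OneVariable

theorem deriv_deriv_eq_of_hasDerivAt {f f' : ℝ → ℂ} {f'' : ℂ} {t₀ : ℝ}
    (hf : ∀ᶠ t in 𝓝 t₀, HasDerivAt f (f' t) t) (hf' : HasDerivAt f' f'' t₀) :
    deriv (deriv f) t₀ = f'' := by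
  have hderiv : deriv f =ᶠ[𝓝 t₀] f' := hf.mono fun t ht => ht.deriv
  rw [hderiv.deriv_eq, hf'.deriv]

theorem HasDerivAt.ofReal_cpow_const {k : ℝ → ℝ} {k' t : ℝ} (hk : HasDerivAt k k' t)
    (hpos : 0 < k t) (σ : ℂ) :
    HasDerivAt (fun t => (k t : ℂ) ^ σ) (σ * (k t : ℂ) ^ (σ - 1) * k') t :=
  ((Complex.hasStrictDerivAt_cpow_const (c := σ)
    (Complex.ofReal_mem_slitPlane.mpr hpos)).hasDerivAt.comp t hk.ofReal_comp :)

theorem deriv_deriv_ofReal_pow_mul_cpow {a a' k k' : ℝ → ℝ} {a'' k'' t₀ : ℝ}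
    (ha : ∀ t, HasDerivAt a (a' t) t) (ha' : HasDerivAt a' a'' t₀)
    (hk : ∀ t, HasDerivAt k (k' t) t) (hk' : HasDerivAt k' k'' t₀) (hk₀ : 0 < k t₀)
    (m : ℕ) (σ : ℂ) :
    deriv (deriv fun t => (a t : ℂ) ^ m * (k t : ℂ) ^ σ) t₀ =
      (m * (m - 1) * (a t₀ : ℂ) ^ (m - 2) * (a' t₀ : ℂ) ^ 2 + m * (a t₀ : ℂ) ^ (m - 1) * a'')
          * (k t₀ : ℂ) ^ σ
        + 2 * (m * (a t₀ : ℂ) ^ (m - 1) * a' t₀) * (σ * (k t₀ : ℂ) ^ (σ - 1) * k' t₀)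
        + (a t₀ : ℂ) ^ m
          * (σ * (σ - 1) * (k t₀ : ℂ) ^ (σ - 2) * (k' t₀ : ℂ) ^ 2
            + σ * (k t₀ : ℂ) ^ (σ - 1) * k'') := by
  have hpow (t : ℝ) : HasDerivAt (fun t => (a t : ℂ) ^ m) (m * (a t : ℂ) ^ (m - 1) * a' t) t :=
    (ha t).ofReal_comp.pow m
  have hpos : ∀ᶠ t in 𝓝 t₀, 0 < k t := continuousAt_const.eventually_lt (hk t₀).continuousAt hk₀
  refine deriv_deriv_eq_of_hasDerivAt (hpos.mono fun t ht =>
    (hpow t).mul ((hk t).ofReal_cpow_const ht σ)) ?_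
  have hpow' : HasDerivAt (fun t => m * (a t : ℂ) ^ (m - 1) * a' t)
      (m * (m - 1) * (a t₀ : ℂ) ^ (m - 2) * a' t₀ * a' t₀ + m * (a t₀ : ℂ) ^ (m - 1) * a'') t₀ := by
    refine ((((ha t₀).ofReal_comp.pow (m - 1)).const_mul (m : ℂ)).mul
      ha'.ofReal_comp).congr_deriv ?_
    rcases m with _ | _ | m
    · simp
    · simp
    · push_cast [Nat.add_sub_cancel, Pi.pow_apply]
      ring
  have hcpow' : HasDerivAt (fun t => σ * (k t : ℂ) ^ (σ - 1) * k' t)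
      (σ * ((σ - 1) * (k t₀ : ℂ) ^ (σ - 2) * k' t₀) * k' t₀ + σ * (k t₀ : ℂ) ^ (σ - 1) * k'')
      t₀ := by
    refine ((((hk t₀).ofReal_cpow_const hk₀ (σ - 1)).const_mul σ).mul
      hk'.ofReal_comp).congr_deriv ?_
    ring_nf
  refine ((hpow'.mul ((hk t₀).ofReal_cpow_const hk₀ σ)).add
    ((hpow t₀).mul hcpow')).congr_deriv ?_
  ring

end OneVariable

section NormFunction

theorem Kfun_pos {V W : Type*} [NormedAddCommGroup V] [NormedAddCommGroup W] {x : V × W}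
    (hx : x ≠ 0) : 0 < Kfun x := by
  rcases eq_or_ne x.1 0 with h | h
  · have h₂ : x.2 ≠ 0 := fun h₂ => hx (Prod.ext h h₂)
    unfold Kfun; positivity
  · unfold Kfun; positivity

theorem Ks_sub_one_mul_Kfun {V W : Type*} [NormedAddCommGroup V] [NormedAddCommGroup W]
    {x : V × W} (hx : x ≠ 0) (σ : ℂ) : Ks (σ - 1) x * Kfun x = Ks σ x := by
  have hK : (Kfun x : ℂ) ≠ 0 := Complex.ofReal_ne_zero.mpr (Kfun_pos hx).ne'
  rw [Ks, Ks, Complex.cpow_sub _ _ hK, Complex.cpow_one, div_mul_cancel₀ _ hK]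

variable {V W : Type*} [NormedAddCommGroup V] [InnerProductSpace ℝ V]
  [NormedAddCommGroup W] [InnerProductSpace ℝ W]

theorem contDiff_Kfun : ContDiff ℝ 2 (Kfun : V × W → ℝ) := by
  have h : (Kfun : V × W → ℝ) = fun y => (‖y.1‖ ^ 2) ^ 2 + ‖y.2‖ ^ 2 := by
    funext y; simp only [Kfun]; ring
  rw [h]
  exact ((contDiff_norm_sq ℝ).comp contDiff_fst).pow 2 |>.add
    ((contDiff_norm_sq ℝ).comp contDiff_snd)

theorem contDiffAt_norm_pow_mul_Ks (P : V →L[ℝ] V) (m : ℕ) (σ : ℂ) {x : V × W} (hx : x ≠ 0) :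
    ContDiffAt ℝ 2 (fun y : V × W => (‖P y.1‖ : ℂ) ^ (2 * m) * Ks σ y) x := by
  have hnorm : ContDiff ℝ 2 fun y : V × W => (‖P y.1‖ : ℂ) ^ (2 * m) := by
    have h : ContDiff ℝ 2 fun y : V × W => ‖P y.1‖ ^ 2 :=
      (contDiff_norm_sq ℝ).comp (P.contDiff.comp contDiff_fst)
    simpa [pow_mul] using (Complex.ofRealCLM.contDiff.comp h).pow m
  have hcpow : ContDiffAt ℝ 2 (fun z : ℂ => z ^ σ) (Kfun x : ℂ) :=
    ((analyticAt_id.cpow analyticAt_const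
      (Complex.ofReal_mem_slitPlane.mpr (Kfun_pos hx))).contDiffAt).restrict_scalars ℝ
  exact hnorm.contDiffAt.mul
    (hcpow.comp (f := fun y : V × W => (Kfun y : ℂ)) x
      (Complex.ofRealCLM.contDiff.comp contDiff_Kfun).contDiffAt)

/-- The value of `S K` at `x`. -/
def KfunDeriv (br : V →ₗ[ℝ] V →ₗ[ℝ] W) (S : V) (x : V × W) : ℝ :=
  4 * ‖x.1‖ ^ 2 * ⟪x.1, S⟫_ℝ - ⟪x.2, br S x.1⟫_ℝ

/-- The value of `S² K` at `x`, valid when `[S,S] = 0`. -/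
def KfunDeriv2 (br : V →ₗ[ℝ] V →ₗ[ℝ] W) (S : V) (x : V × W) : ℝ :=
  8 * ⟪x.1, S⟫_ℝ ^ 2 + 4 * ‖x.1‖ ^ 2 * ‖S‖ ^ 2 + ‖br S x.1‖ ^ 2 / 2

variable (br : V →ₗ[ℝ] V →ₗ[ℝ] W) {S : V}

theorem hasDerivAt_Kfun_mulExp (hS : br S S = 0) (x : V × W) (t : ℝ) :
    HasDerivAt (fun t => Kfun (mulExp br S x t)) (KfunDeriv br S (mulExp br S x t)) t := by
  have hK : (fun t => Kfun (mulExp br S x t))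
      = fun t => (‖(mulExp br S x t).1‖ ^ 2) ^ 2 + ‖(mulExp br S x t).2‖ ^ 2 := by
    funext t; simp only [Kfun]; ring
  rw [hK]
  refine (((hasDerivAt_mulExp_fst br S x t).norm_sq.pow 2).add
    (hasDerivAt_mulExp_snd br S x t).norm_sq).congr_deriv ?_
  simp only [KfunDeriv, mulExp, map_add, map_smul, hS, smul_zero, add_zero, inner_smul_right]
  ring

theorem hasDerivAt_KfunDeriv_mulExp (hS : br S S = 0) (x : V × W) (t : ℝ) :
    HasDerivAt (fun t => KfunDeriv br S (mulExp br S x t))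
      (KfunDeriv2 br S (mulExp br S x t)) t := by
  have hbrS (t : ℝ) : br S (mulExp br S x t).1 = br S x.1 := by
    simp [mulExp, hS]
  have hK : (fun t => KfunDeriv br S (mulExp br S x t)) = fun t =>
      4 * ‖(mulExp br S x t).1‖ ^ 2 * ⟪(mulExp br S x t).1, S⟫_ℝ
        - ⟪(mulExp br S x t).2, br S x.1⟫_ℝ := by
    funext t; rw [KfunDeriv, hbrS]
  rw [hK]
  refine ((((hasDerivAt_mulExp_fst br S x t).norm_sq.const_mul 4).mul
    ((hasDerivAt_mulExp_fst br S x t).inner ℝ (hasDerivAt_const t S))).sub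
    ((hasDerivAt_mulExp_snd br S x t).inner ℝ (hasDerivAt_const t (br S x.1)))).congr_deriv ?_
  simp only [KfunDeriv2, hbrS, inner_zero_right, inner_smul_left, real_inner_self_eq_norm_sq,
    conj_trivial]
  ring

theorem vfV_vfV_norm_pow_mul_Ks [FiniteDimensional ℝ V] (P : V →L[ℝ] V) (hS : br S S = 0)
    (m : ℕ) (σ : ℂ) {x : V × W} (hx : x ≠ 0) :
    vfV br S (vfV br S fun y => (‖P y.1‖ : ℂ) ^ (2 * m) * Ks σ y) x =
      (m * (m - 1) * ((‖P x.1‖ ^ 2 : ℝ) : ℂ) ^ (m - 2) * ((2 * ⟪P x.1, P S⟫_ℝ : ℝ) : ℂ) ^ 2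
          + m * ((‖P x.1‖ ^ 2 : ℝ) : ℂ) ^ (m - 1) * ((2 * ‖P S‖ ^ 2 : ℝ) : ℂ)) * Ks σ x
        + 2 * (m * ((‖P x.1‖ ^ 2 : ℝ) : ℂ) ^ (m - 1) * ((2 * ⟪P x.1, P S⟫_ℝ : ℝ) : ℂ))
          * (σ * Ks (σ - 1) x * KfunDeriv br S x)
        + ((‖P x.1‖ ^ 2 : ℝ) : ℂ) ^ m
          * (σ * (σ - 1) * Ks (σ - 2) x * (KfunDeriv br S x : ℂ) ^ 2
            + σ * Ks (σ - 1) x * KfunDeriv2 br S x) := by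
  rw [vfV_vfV_eq_deriv_deriv br hS (contDiffAt_norm_pow_mul_Ks P m σ hx)]
  have hcurve : (fun y : V × W => (‖P y.1‖ : ℂ) ^ (2 * m) * Ks σ y) ∘ mulExp br S x =
      fun t => ((‖P (mulExp br S x t).1‖ ^ 2 : ℝ) : ℂ) ^ m * (Kfun (mulExp br S x t) : ℂ) ^ σ := by
    funext t
    simp [Ks, pow_mul]
  have ha (t : ℝ) : HasDerivAt (fun t => ‖P (mulExp br S x t).1‖ ^ 2)
      (2 * ⟪P (mulExp br S x t).1, P S⟫_ℝ) t :=
    (P.hasFDerivAt.comp_hasDerivAt t (hasDerivAt_mulExp_fst br S x t)).norm_sq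
  have ha' : HasDerivAt (fun t => 2 * ⟪P (mulExp br S x t).1, P S⟫_ℝ) (2 * ‖P S‖ ^ 2) 0 := by
    simpa [real_inner_self_eq_norm_sq] using
      ((P.hasFDerivAt.comp_hasDerivAt 0 (hasDerivAt_mulExp_fst br S x 0)).inner ℝ
        (hasDerivAt_const (0 : ℝ) (P S))).const_mul 2
  rw [hcurve, deriv_deriv_ofReal_pow_mul_cpow ha ha' (hasDerivAt_Kfun_mulExp br hS x)
    (hasDerivAt_KfunDeriv_mulExp br hS x 0) (by rw [mulExp_zero]; exact Kfun_pos hx)]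
  simp only [mulExp_zero, Ks]

end NormFunction

section Projection

variable {V : Type*} [NormedAddCommGroup V] [InnerProductSpace ℝ V]

theorem Submodule.inner_starProjection_left_eq_inner_starProjection (U : Submodule ℝ V)
    [U.HasOrthogonalProjection] (v w : V) :
    ⟪U.starProjection v, w⟫_ℝ = ⟪U.starProjection v, U.starProjection w⟫_ℝ := by
  rw [← U.inner_starProjection_left_eq_right,
    U.starProjection_eq_self_iff.mpr (U.starProjection_apply_mem v)]

variable {ι : Type*} [Fintype ι] (b : OrthonormalBasis ι ℝ V) {U : Submodule ℝ V}
  [U.HasOrthogonalProjection] {F : Finset ι}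

theorem OrthonormalBasis.sum_inner_mul_inner_eq_inner_starProjection
    (hF : ∀ i ∈ F, b i ∈ U) (hFc : ∀ i ∉ F, b i ∈ Uᗮ) (v w : V) :
    ∑ i ∈ F, ⟪v, b i⟫_ℝ * ⟪w, b i⟫_ℝ = ⟪U.starProjection v, w⟫_ℝ := by
  calc ∑ i ∈ F, ⟪v, b i⟫_ℝ * ⟪w, b i⟫_ℝ
      = ∑ i ∈ F, ⟪U.starProjection v, b i⟫_ℝ * ⟪b i, w⟫_ℝ := by
        refine Finset.sum_congr rfl fun i hi => ?_
        rw [U.inner_starProjection_left_eq_right, U.starProjection_eq_self_iff.mpr (hF i hi),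
          real_inner_comm w]
    _ = ∑ i, ⟪U.starProjection v, b i⟫_ℝ * ⟪b i, w⟫_ℝ := by
        refine Finset.sum_subset (Finset.subset_univ F) fun i _ hi => ?_
        rw [U.inner_starProjection_left_eq_right,
          U.starProjection_apply_eq_zero_iff.mpr (hFc i hi), inner_zero_right, zero_mul]
    _ = ⟪U.starProjection v, w⟫_ℝ := b.sum_inner_mul_inner _ _

theorem OrthonormalBasis.sum_inner_sq_eq_norm_starProjection_sq
    (hF : ∀ i ∈ F, b i ∈ U) (hFc : ∀ i ∉ F, b i ∈ Uᗮ) (v : V) :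
    ∑ i ∈ F, ⟪v, b i⟫_ℝ ^ 2 = ‖U.starProjection v‖ ^ 2 := by
  simp only [sq]
  rw [b.sum_inner_mul_inner_eq_inner_starProjection hF hFc,
    U.inner_starProjection_left_eq_inner_starProjection, real_inner_self_eq_norm_sq, sq]

theorem OrthonormalBasis.sum_norm_starProjection_sq {G : Finset ι} (hGF : G ⊆ F)
    (hG : ∀ i ∈ G, b i ∈ U) (hGc : ∀ i ∉ G, b i ∈ Uᗮ) :
    ∑ i ∈ F, ‖U.starProjection (b i)‖ ^ 2 = G.card := by
  rw [← Finset.sum_subset hGF fun i _ hi => by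
    rw [U.starProjection_apply_eq_zero_iff.mpr (hGc i hi), norm_zero, zero_pow two_ne_zero]]
  rw [Finset.sum_congr rfl fun i hi => by
    rw [U.starProjection_eq_self_iff.mpr (hG i hi), b.orthonormal.1 i, one_pow]]
  simp

end Projection

section HType

variable {V W : Type*} [NormedAddCommGroup V] [InnerProductSpace ℝ V]
  [NormedAddCommGroup W] [InnerProductSpace ℝ W]
  {br : V →ₗ[ℝ] V →ₗ[ℝ] W} {J : W →ₗ[ℝ] V →ₗ[ℝ] V}

theorem inner_J_left (hbr : br.IsAlt) (hJ : ∀ (z : W) (X Y : V), ⟪J z X, Y⟫_ℝ = ⟪z, br X Y⟫_ℝ)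
    (z : W) (X Y : V) : ⟪J z X, Y⟫_ℝ = -⟪X, J z Y⟫_ℝ := by
  rw [← real_inner_comm X, hJ, hJ, ← hbr.neg, inner_neg_right]

theorem inner_self_J_eq_zero (hbr : br.IsAlt)
    (hJ : ∀ (z : W) (X Y : V), ⟪J z X, Y⟫_ℝ = ⟪z, br X Y⟫_ℝ) (z : W) (X : V) :
    ⟪X, J z X⟫_ℝ = 0 := by
  rw [real_inner_comm, hJ, hbr.self_eq_zero, inner_zero_right]

theorem norm_J_sq (hbr : br.IsAlt) (hJ : ∀ (z : W) (X Y : V), ⟪J z X, Y⟫_ℝ = ⟪z, br X Y⟫_ℝ)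
    (hH : ∀ (z : W) (X : V), J z (J z X) = (-16 * ‖z‖ ^ 2) • X) (z : W) (X : V) :
    ‖J z X‖ ^ 2 = 16 * ‖z‖ ^ 2 * ‖X‖ ^ 2 := by
  rw [← real_inner_self_eq_norm_sq, inner_J_left hbr hJ, hH, real_inner_smul_right,
    real_inner_self_eq_norm_sq]
  ring

theorem inner_br_eq_neg_inner_J (hbr : br.IsAlt)
    (hJ : ∀ (z : W) (X Y : V), ⟪J z X, Y⟫_ℝ = ⟪z, br X Y⟫_ℝ) (z : W) (S X : V) :
    ⟪z, br S X⟫_ℝ = -⟪J z X, S⟫_ℝ := by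
  rw [← hJ, inner_J_left hbr hJ, real_inner_comm]

theorem J_mem_orthogonal (hbr : br.IsAlt)
    (hJ : ∀ (z : W) (X Y : V), ⟪J z X, Y⟫_ℝ = ⟪z, br X Y⟫_ℝ) {V₁ : Submodule ℝ V}
    (h₁₂ : ∀ X ∈ V₁, ∀ Y ∈ V₁ᗮ, br X Y = 0) (z : W) {v : V} (hv : v ∈ V₁ᗮ) : J z v ∈ V₁ᗮ := by
  rw [Submodule.mem_orthogonal]
  intro u hu
  rw [← neg_eq_zero, ← inner_J_left hbr hJ, hJ, h₁₂ u hu v hv, inner_zero_right]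

theorem Submodule.starProjection_J (hbr : br.IsAlt)
    (hJ : ∀ (z : W) (X Y : V), ⟪J z X, Y⟫_ℝ = ⟪z, br X Y⟫_ℝ)
    (U : Submodule ℝ V) [U.HasOrthogonalProjection] (hU : ∀ z, ∀ v ∈ U, J z v ∈ U)
    (z : W) (v : V) : U.starProjection (J z v) = J z (U.starProjection v) := by
  refine U.eq_starProjection_of_mem_of_inner_eq_zero (hU z _ (U.starProjection_apply_mem v))
    fun w hw => ?_
  rw [← map_sub, inner_J_left hbr hJ, U.starProjection_inner_eq_zero v _ (hU z w hw), neg_zero]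

theorem KfunDeriv_eq_inner (hbr : br.IsAlt)
    (hJ : ∀ (z : W) (X Y : V), ⟪J z X, Y⟫_ℝ = ⟪z, br X Y⟫_ℝ) (S : V) (x : V × W) :
    KfunDeriv br S x = ⟪(4 * ‖x.1‖ ^ 2) • x.1 + J x.2 x.1, S⟫_ℝ := by
  rw [KfunDeriv, inner_br_eq_neg_inner_J hbr hJ, inner_add_left, real_inner_smul_left]
  ring

end HType

section HTypeSums

variable {V W : Type*} [NormedAddCommGroup V] [InnerProductSpace ℝ V]
  [NormedAddCommGroup W] [InnerProductSpace ℝ W]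
  {br : V →ₗ[ℝ] V →ₗ[ℝ] W} {J : W →ₗ[ℝ] V →ₗ[ℝ] V}
  {ι κ : Type*} [Fintype ι] [Fintype κ] (S : OrthonormalBasis ι ℝ V)
  {U : Submodule ℝ V} [U.HasOrthogonalProjection] {F : Finset ι}

theorem sum_norm_br_sq (hbr : br.IsAlt)
    (hJ : ∀ (z : W) (X Y : V), ⟪J z X, Y⟫_ℝ = ⟪z, br X Y⟫_ℝ)
    (hH : ∀ (z : W) (X : V), J z (J z X) = (-16 * ‖z‖ ^ 2) • X)
    (hU : ∀ z, ∀ v ∈ U, J z v ∈ U) (T : OrthonormalBasis κ ℝ W)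
    (hF : ∀ i ∈ F, S i ∈ U) (hFc : ∀ i ∉ F, S i ∈ Uᗮ) (X : V) :
    ∑ j ∈ F, ‖br (S j) X‖ ^ 2 = 16 * Fintype.card κ * ‖U.starProjection X‖ ^ 2 := by
  calc ∑ j ∈ F, ‖br (S j) X‖ ^ 2 = ∑ j ∈ F, ∑ k, ⟪J (T k) X, S j⟫_ℝ ^ 2 := by
        simp_rw [← T.sum_sq_inner_right, inner_br_eq_neg_inner_J hbr hJ, neg_sq]
    _ = ∑ k, ‖J (T k) (U.starProjection X)‖ ^ 2 := by
        rw [Finset.sum_comm]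
        simp_rw [S.sum_inner_sq_eq_norm_starProjection_sq hF hFc, U.starProjection_J hbr hJ hU]
    _ = 16 * Fintype.card κ * ‖U.starProjection X‖ ^ 2 := by
        simp only [norm_J_sq hbr hJ hH, T.orthonormal.1, one_pow, mul_one, Finset.sum_const,
          Finset.card_univ, nsmul_eq_mul]
        ring

theorem sum_KfunDeriv_sq (hbr : br.IsAlt)
    (hJ : ∀ (z : W) (X Y : V), ⟪J z X, Y⟫_ℝ = ⟪z, br X Y⟫_ℝ)
    (hH : ∀ (z : W) (X : V), J z (J z X) = (-16 * ‖z‖ ^ 2) • X)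
    (hU : ∀ z, ∀ v ∈ U, J z v ∈ U) (hF : ∀ i ∈ F, S i ∈ U) (hFc : ∀ i ∉ F, S i ∈ Uᗮ)
    (x : V × W) :
    ∑ j ∈ F, KfunDeriv br (S j) x ^ 2 = 16 * Kfun x * ‖U.starProjection x.1‖ ^ 2 := by
  simp_rw [KfunDeriv_eq_inner hbr hJ]
  rw [S.sum_inner_sq_eq_norm_starProjection_sq hF hFc, map_add, map_smul,
    U.starProjection_J hbr hJ hU, norm_add_sq_real, real_inner_smul_left,
    inner_self_J_eq_zero hbr hJ, norm_smul, norm_J_sq hbr hJ hH,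
    Real.norm_of_nonneg (by positivity), Kfun]
  ring

theorem sum_KfunDeriv2 (hbr : br.IsAlt)
    (hJ : ∀ (z : W) (X Y : V), ⟪J z X, Y⟫_ℝ = ⟪z, br X Y⟫_ℝ)
    (hH : ∀ (z : W) (X : V), J z (J z X) = (-16 * ‖z‖ ^ 2) • X)
    (hU : ∀ z, ∀ v ∈ U, J z v ∈ U) (T : OrthonormalBasis κ ℝ W)
    (hF : ∀ i ∈ F, S i ∈ U) (hFc : ∀ i ∉ F, S i ∈ Uᗮ) (x : V × W) :
    ∑ j ∈ F, KfunDeriv2 br (S j) x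
      = 8 * (1 + Fintype.card κ) * ‖U.starProjection x.1‖ ^ 2 + 4 * ‖x.1‖ ^ 2 * F.card := by
  simp only [KfunDeriv2, Finset.sum_add_distrib, ← Finset.mul_sum, ← Finset.sum_div,
    S.orthonormal.1, one_pow, mul_one, Finset.sum_const, nsmul_eq_mul]
  rw [S.sum_inner_sq_eq_norm_starProjection_sq hF hFc, sum_norm_br_sq S hbr hJ hH hU T hF hFc]
  ring

theorem sum_inner_mul_KfunDeriv (hbr : br.IsAlt)
    (hJ : ∀ (z : W) (X Y : V), ⟪J z X, Y⟫_ℝ = ⟪z, br X Y⟫_ℝ) {V₂ : Submodule ℝ V}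
    [V₂.HasOrthogonalProjection] (hV₂ : ∀ z, ∀ v ∈ V₂, J z v ∈ V₂) (hV₂U : V₂ ≤ U)
    (hF : ∀ i ∈ F, S i ∈ U) (hFc : ∀ i ∉ F, S i ∈ Uᗮ) (x : V × W) :
    ∑ j ∈ F, ⟪V₂.starProjection x.1, S j⟫_ℝ * KfunDeriv br (S j) x
      = 4 * ‖x.1‖ ^ 2 * ‖V₂.starProjection x.1‖ ^ 2 := by
  have hPJ : ⟪V₂.starProjection x.1, J x.2 x.1⟫_ℝ = 0 := by
    rw [V₂.inner_starProjection_left_eq_inner_starProjection, V₂.starProjection_J hbr hJ hV₂,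
      inner_self_J_eq_zero hbr hJ]
  simp_rw [KfunDeriv_eq_inner hbr hJ]
  rw [S.sum_inner_mul_inner_eq_inner_starProjection hF hFc,
    U.starProjection_eq_self_iff.mpr (hV₂U (V₂.starProjection_apply_mem x.1)), inner_add_right,
    real_inner_smul_right, hPJ, V₂.inner_starProjection_left_eq_inner_starProjection,
    real_inner_self_eq_norm_sq]
  ring

end HTypeSums

theorem natCast_mul_pow_sub_one_mul {R : Type*} [CommSemiring R] (a : R) (n : ℕ) :
    (n : R) * a ^ (n - 1) * a = n * a ^ n := by
  cases n <;> simp [pow_succ, mul_assoc]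

theorem natCast_mul_sub_one_mul_pow_sub_two_mul {R : Type*} [CommRing R] (a : R) (n : ℕ) :
    (n : R) * (n - 1) * a ^ (n - 2) * a = n * (n - 1) * a ^ (n - 1) := by
  rcases n with _ | _ | n
  · simp
  · simp
  · simp [pow_succ, mul_assoc]

theorem subLap_norm_pow_mul_Ks {V W : Type*} [NormedAddCommGroup V] [InnerProductSpace ℝ V]
    [NormedAddCommGroup W] [InnerProductSpace ℝ W] [FiniteDimensional ℝ V]
    {br : V →ₗ[ℝ] V →ₗ[ℝ] W} {J : W →ₗ[ℝ] V →ₗ[ℝ] V} {ι κ : Type*} [Fintype ι] [Fintype κ]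
    (hbr : br.IsAlt) (hJ : ∀ (z : W) (X Y : V), ⟪J z X, Y⟫_ℝ = ⟪z, br X Y⟫_ℝ)
    (hH : ∀ (z : W) (X : V), J z (J z X) = (-16 * ‖z‖ ^ 2) • X)
    {V₂ U : Submodule ℝ V} (hV₂ : ∀ z, ∀ v ∈ V₂, J z v ∈ V₂) (hU : ∀ z, ∀ v ∈ U, J z v ∈ U)
    (hV₂U : V₂ ≤ U) (S : OrthonormalBasis ι ℝ V) (T : OrthonormalBasis κ ℝ W) {F : Finset ι}
    (hF : ∀ i ∈ F, S i ∈ U) (hFc : ∀ i ∉ F, S i ∈ Uᗮ) (m : ℕ) (σ : ℂ) {x : V × W}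
    (hx : x ≠ 0) :
    subLap br F (fun j => S j) (fun y => (‖V₂.starProjection y.1‖ : ℂ) ^ (2 * m) * Ks σ y) x =
      m * (4 * (m - 1) + 2 * ((∑ j ∈ F, ‖V₂.starProjection (S j)‖ ^ 2 : ℝ) : ℂ))
          * ((‖V₂.starProjection x.1‖ ^ 2 : ℝ) : ℂ) ^ (m - 1) * Ks σ x
        + 4 * σ * ((‖V₂.starProjection x.1‖ ^ 2 : ℝ) : ℂ) ^ m * Ks (σ - 1) x
          * (4 * m * ((‖x.1‖ ^ 2 : ℝ) : ℂ)
            + (4 * σ - 2 + 2 * Fintype.card κ) * ((‖U.starProjection x.1‖ ^ 2 : ℝ) : ℂ)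
            + ((‖x.1‖ ^ 2 : ℝ) : ℂ) * F.card) := by
  set b : ℂ := ((‖V₂.starProjection x.1‖ ^ 2 : ℝ) : ℂ) with hb
  have hper (j : ι) : vfV br (S j) (vfV br (S j)
      fun y => (‖V₂.starProjection y.1‖ : ℂ) ^ (2 * m) * Ks σ y) x =
      4 * m * (m - 1) * b ^ (m - 2) * Ks σ x * ((⟪V₂.starProjection x.1, S j⟫_ℝ ^ 2 : ℝ) : ℂ)
        + 2 * m * b ^ (m - 1) * Ks σ x * ((‖V₂.starProjection (S j)‖ ^ 2 : ℝ) : ℂ)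
        + 4 * m * b ^ (m - 1) * σ * Ks (σ - 1) x
          * ((⟪V₂.starProjection x.1, S j⟫_ℝ * KfunDeriv br (S j) x : ℝ) : ℂ)
        + b ^ m * σ * (σ - 1) * Ks (σ - 2) x * ((KfunDeriv br (S j) x ^ 2 : ℝ) : ℂ)
        + b ^ m * σ * Ks (σ - 1) x * (KfunDeriv2 br (S j) x : ℂ) := by
    rw [vfV_vfV_norm_pow_mul_Ks br _ (hbr.self_eq_zero _) m σ hx, ← hb,
      ← V₂.inner_starProjection_left_eq_inner_starProjection]
    push_cast
    ring
  simp only [subLap, hper, Finset.sum_add_distrib, ← Finset.mul_sum, ← Complex.ofReal_sum]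
  rw [S.sum_inner_sq_eq_norm_starProjection_sq hF hFc,
    U.starProjection_eq_self_iff.mpr (hV₂U (V₂.starProjection_apply_mem x.1)),
    sum_inner_mul_KfunDeriv S hbr hJ hV₂ hV₂U hF hFc, sum_KfunDeriv_sq S hbr hJ hH hU hF hFc,
    sum_KfunDeriv2 S hbr hJ hH hU T hF hFc]
  have hK := Ks_sub_one_mul_Kfun hx (σ - 1)
  rw [show σ - 1 - 1 = σ - 2 by ring] at hK
  simp only [hb]
  push_cast at hK ⊢
  linear_combination
    (4 * Ks σ x) * natCast_mul_sub_one_mul_pow_sub_two_mul ((‖V₂.starProjection x.1‖ : ℂ) ^ 2) m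
    + (16 * σ * ‖x.1‖ ^ 2 * Ks (σ - 1) x)
      * natCast_mul_pow_sub_one_mul ((‖V₂.starProjection x.1‖ : ℂ) ^ 2) m
    + (16 * ((‖V₂.starProjection x.1‖ : ℂ) ^ 2) ^ m * σ * (σ - 1) * ‖U.starProjection x.1‖ ^ 2)
      * hK

theorem Fin.card_filter_le_val (p p₁ : ℕ) :
    (Finset.univ.filter fun j : Fin p => p₁ ≤ (j : ℕ)).card = p - p₁ := by
  have h := Finset.card_filter_add_card_filter_not (s := Finset.univ)
    (fun j : Fin p => (j : ℕ) < p₁)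
  simp only [not_lt, Finset.card_univ, Fintype.card_fin] at h
  have h' := Fin.card_filter_val_lt (n := p) (m := p₁)
  omega

theorem combDeltaX2mKs_general {V W : Type*} [NormedAddCommGroup V] [InnerProductSpace ℝ V]
    [NormedAddCommGroup W] [InnerProductSpace ℝ W]
    [FiniteDimensional ℝ V] [FiniteDimensional ℝ W]
    (p p₁ p₂ q : ℕ) (hp : Module.finrank ℝ V = p)
    (V₁ : Submodule ℝ V) (hp₁ : Module.finrank ℝ V₁ = p₁)
    (hp₂ : Module.finrank ℝ V₁ᗮ = p₂)
    (br : V →ₗ[ℝ] V →ₗ[ℝ] W) (hbr : ∀ X : V, br X X = 0)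
    (hbr12 : ∀ X ∈ V₁, ∀ Y ∈ V₁ᗮ, br X Y = 0)
    (J : W →ₗ[ℝ] V →ₗ[ℝ] V)
    (hJ : ∀ (z : W) (X Y : V), ⟪J z X, Y⟫_ℝ = ⟪z, br X Y⟫_ℝ)
    (hH : ∀ (z : W) (X : V), J z (J z X) = (-16 * ‖z‖^2) • X)
    (S : OrthonormalBasis (Fin p) ℝ V)
    (hS : ∀ j : Fin p, ((j : ℕ) < p₁ → S j ∈ V₁) ∧ (p₁ ≤ (j : ℕ) → S j ∈ V₁ᗮ))
    (T : OrthonormalBasis (Fin q) ℝ W)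
    (s : ℂ) (m : ℕ) :
    ∀ x : V × W, x ≠ 0 →
      (4*s + 2*(rhoC p q) - 2)
            * subLap br (Finset.univ.filter fun j : Fin p => p₁ ≤ (j : ℕ)) (fun j => S j)
                (fun y => (‖projPerp V₁ y.1‖ : ℂ)^(2*m) * Ks (s - m) y) x
          - (4*(m : ℂ) + (p₂ : ℂ))
            * subLap br Finset.univ (fun j => S j)
                (fun y => (‖projPerp V₁ y.1‖ : ℂ)^(2*m) * Ks (s - m) y) x
        = 8*(s - (m : ℂ))*(4*s + 2*(rhoC p q) - 2)*(2*s + (q : ℂ) - 2*(m : ℂ) - 1)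
              * (‖projPerp V₁ x.1‖ : ℂ)^(2*m + 2) * Ks (s - m - 1) x
          + 2*(m : ℂ)*(2*(m : ℂ) + (p₂ : ℂ) - 2)*(4*s + 2*(rho1C p₁ q) - 4*(m : ℂ) - 2)
              * (‖projPerp V₁ x.1‖ : ℂ)^(2*m - 2) * Ks (s - m) x := by
  intro x hx
  set G := Finset.univ.filter fun j : Fin p => p₁ ≤ (j : ℕ)
  have hG : ∀ j ∈ G, S j ∈ V₁ᗮ := fun j hj => (hS j).2 (Finset.mem_filter.mp hj).2
  have hGc : ∀ j ∉ G, S j ∈ V₁ᗮᗮ := fun j hj =>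
    V₁.le_orthogonal_orthogonal ((hS j).1 (by simpa [G] using hj))
  have hV₂ : ∀ z, ∀ v ∈ V₁ᗮ, J z v ∈ V₁ᗮ := fun z _ hv => J_mem_orthogonal hbr hJ hbr12 z hv
  have hp₁₂ : p = p₁ + p₂ := by
    have := Submodule.finrank_add_finrank_orthogonal V₁
    omega
  have hG_card : G.card = p₂ := by
    have := V₁.finrank_le
    rw [Fin.card_filter_le_val]
    omega
  simp only [projPerp, ← Submodule.starProjection_apply]
  rw [subLap_norm_pow_mul_Ks hbr hJ hH hV₂ hV₂ le_rfl S T hG hGc m (s - m) hx,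
    subLap_norm_pow_mul_Ks hbr hJ hH hV₂ (fun _ _ _ => Submodule.mem_top) le_top S T
      (F := Finset.univ) (fun _ _ => Submodule.mem_top) (fun _ h => absurd (Finset.mem_univ _) h)
      m (s - m) hx,
    S.sum_norm_starProjection_sq (subset_refl G) hG hGc,
    S.sum_norm_starProjection_sq (Finset.subset_univ G) hG hGc, hG_card, Finset.card_univ,
    Fintype.card_fin, Fintype.card_fin, Submodule.starProjection_top, ContinuousLinearMap.id_apply,
    show 2 * m - 2 = 2 * (m - 1) by omega, pow_mul, show 2 * m + 2 = 2 * (m + 1) by ring, pow_mul]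
  simp only [rhoC, rho1C, hp₁₂]
  push_cast
  ring

/-- `((4s+2ρ-2)Δ₂ - (4m+p₂)Δ)(|X₂|^{2m} K_{s-m})
= 8(s-m)(4s+2ρ-2)(2s+q-2m-1)|X₂|^{2m+2} K_{s-m-1}
+ 2m(2m+p₂-2)(4s+2ρ₁-4m-2)|X₂|^{2m-2} K_{s-m}` on `(𝔳 × 𝔷) ∖ {(0,0)}`,
for integers `m ≥ 1`. -/
theorem combDeltaX2mKs {V W : Type*} [NormedAddCommGroup V] [InnerProductSpace ℝ V]
    [NormedAddCommGroup W] [InnerProductSpace ℝ W]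
    [FiniteDimensional ℝ V] [FiniteDimensional ℝ W]
    (p p₁ p₂ q : ℕ) (hp : Module.finrank ℝ V = p) (hq : Module.finrank ℝ W = q)
    (V₁ : Submodule ℝ V) (hp₁ : Module.finrank ℝ V₁ = p₁)
    (hp₂ : Module.finrank ℝ V₁ᗮ = p₂)
    (br : V →ₗ[ℝ] V →ₗ[ℝ] W) (hbr : ∀ X : V, br X X = 0)
    (hbr12 : ∀ X ∈ V₁, ∀ Y ∈ V₁ᗮ, br X Y = 0)
    (J : W →ₗ[ℝ] V →ₗ[ℝ] V)
    (hJ : ∀ (z : W) (X Y : V), ⟪J z X, Y⟫_ℝ = ⟪z, br X Y⟫_ℝ)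
    (hH : ∀ (z : W) (X : V), J z (J z X) = (-16 * ‖z‖^2) • X)
    (S : OrthonormalBasis (Fin p) ℝ V)
    (hS : ∀ j : Fin p, ((j : ℕ) < p₁ → S j ∈ V₁) ∧ (p₁ ≤ (j : ℕ) → S j ∈ V₁ᗮ))
    (T : OrthonormalBasis (Fin q) ℝ W)
    (s : ℂ) (m : ℕ) (hm : 1 ≤ m) :
    ∀ x : V × W, x ≠ 0 →
      (4*s + 2*(rhoC p q) - 2)
            * subLap br (Finset.univ.filter fun j : Fin p => p₁ ≤ (j : ℕ)) (fun j => S j)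
                (fun y => (‖projPerp V₁ y.1‖ : ℂ)^(2*m) * Ks (s - m) y) x
          - (4*(m : ℂ) + (p₂ : ℂ))
            * subLap br Finset.univ (fun j => S j)
                (fun y => (‖projPerp V₁ y.1‖ : ℂ)^(2*m) * Ks (s - m) y) x
        = 8*(s - (m : ℂ))*(4*s + 2*(rhoC p q) - 2)*(2*s + (q : ℂ) - 2*(m : ℂ) - 1)
              * (‖projPerp V₁ x.1‖ : ℂ)^(2*m + 2) * Ks (s - m - 1) x
          + 2*(m : ℂ)*(2*(m : ℂ) + (p₂ : ℂ) - 2)*(4*s + 2*(rho1C p₁ q) - 4*(m : ℂ) - 2)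
              * (‖projPerp V₁ x.1‖ : ℂ)^(2*m - 2) * Ks (s - m) x :=
  combDeltaX2mKs_general p p₁ p₂ q hp V₁ hp₁ hp₂ br hbr hbr12 J hJ hH S hS T s m
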